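/- Let p be a prime, and Δ(A,B) the simplex with a_s = b_d = p, b_s = 0, d = rp − 1, a_i + b_i = p − 1 for 1 ≤ i ≤ s−1, and b_i = p − 1 for s+1 ≤ i ≤ d−1. Then Δ(A,B) is Gorenstein of index r, i.e., r·Δ(A,B) − (1,…,1) is reflexive. -/

import Mathlib

open scoped BigOperators
open MeasureTheory

noncomputable section

/-- The real point corresponding to a lattice point. -/
def toReal {d : ℕ} (v : Fin d → ℤ) : Fin d → ℝ := fun i => (v i : ℝ)

/-- The finite abelian group `Λ_Δ ⊆ (ℝ/ℤ)^{d+1}` attached to a lattice simplex with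
vertices `v 0, …, v d`. -/
def LambdaSet {d : ℕ} (v : Fin (d + 1) → Fin d → ℤ) :
    Set (Fin (d + 1) → AddCircle (1 : ℝ)) :=
  {lam | ∃ mu : Fin (d + 1) → ℝ,
    (∀ i, ((mu i : ℝ) : AddCircle (1 : ℝ)) = lam i) ∧
    (∀ j, ∃ n : ℤ, ∑ i, mu i * (v i j : ℝ) = (n : ℝ)) ∧
    (∃ n : ℤ, ∑ i, mu i = (n : ℝ))}

/-- The simplex spanned by the given lattice points. -/
def simplexOf {d : ℕ} (v : Fin (d + 1) → Fin d → ℤ) : Set (Fin d → ℝ) :=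
  convexHull ℝ (Set.range fun i => toReal (v i))

/-- The dual (polar) body `{y : ⟨x,y⟩ ≤ 1 ∀ x ∈ P}`. -/
def polarDual {d : ℕ} (P : Set (Fin d → ℝ)) : Set (Fin d → ℝ) :=
  {y | ∀ x ∈ P, ∑ i, x i * y i ≤ 1}

/-- A point of `ℝ^d` is a lattice point if all its coordinates are integers. -/
def IsLatticePoint {d : ℕ} (x : Fin d → ℝ) : Prop := ∀ i, ∃ n : ℤ, x i = (n : ℝ)

/-- A polytope is reflexive if the origin is its unique interior lattice point and its
dual polytope is again a lattice polytope. -/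
def IsReflexive {d : ℕ} (P : Set (Fin d → ℝ)) : Prop :=
  (0 ∈ interior P) ∧
  (∀ x ∈ interior P, IsLatticePoint x → x = 0) ∧
  ∃ V : Finset (Fin d → ℤ), polarDual P = convexHull ℝ (toReal '' (V : Set (Fin d → ℤ)))

/-- A lattice polytope is Gorenstein of index `r` if some lattice translate of its
`r`-th dilate is reflexive. -/
def IsGorenstein {d : ℕ} (P : Set (Fin d → ℝ)) (r : ℕ) : Prop :=
  ∃ w : Fin d → ℤ, IsReflexive ((fun x => (r : ℝ) • x + toReal w) '' P)

/-- Unimodular equivalence of subsets of `ℝ^d`. -/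
def UnimodEquiv {d : ℕ} (P Q : Set (Fin d → ℝ)) : Prop :=
  ∃ (U : Matrix (Fin d) (Fin d) ℤ) (w : Fin d → ℤ), IsUnit U.det ∧
    Q = (fun x => fun j => (∑ i, x i * (U i j : ℝ)) + (w j : ℝ)) '' P

/-- `P` is a lattice pyramid: it is unimodularly equivalent to
`conv(V × {0}, e_j)` for a finite set `V` of lattice points lying in a coordinate
hyperplane. -/
def IsLatticePyramid {d : ℕ} (P : Set (Fin d → ℝ)) : Prop :=
  ∃ (j : Fin d) (V : Finset (Fin d → ℤ)),
    (∀ x ∈ V, x j = 0) ∧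
    UnimodEquiv P (convexHull ℝ
      ((toReal '' (V : Set (Fin d → ℤ))) ∪ {fun i => if i = j then (1 : ℝ) else 0}))

/-- The vertices of the simplex `Δ(A)` associated to `A = (a 1, …, a d)`:
`v 0 = 0`, `v i = e_i` for `1 ≤ i ≤ d-1`, and
`v d = ∑_{j=1}^{d-1} (a d - a j) e_j + (a d) e_d`. -/
def simplexVerts (d : ℕ) (a : ℕ → ℤ) : Fin (d + 1) → Fin d → ℤ := fun i j =>
  if (i : ℕ) = 0 then 0
  else if (i : ℕ) = d then (if (j : ℕ) = d - 1 then a d else a d - a ((j : ℕ) + 1))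
  else if (j : ℕ) + 1 = (i : ℕ) then 1 else 0

/-- The vertices of the simplex `Δ(A,B)`: `v 0 = 0`, `v i = e_i` for
`i ∉ {0, s, d}`, `v s = ∑_{j=1}^s (a j) e_j`, `v d = ∑_{j=1}^d (b j) e_j`. -/
def simplexVerts2 (d s : ℕ) (a b : ℕ → ℤ) : Fin (d + 1) → Fin d → ℤ := fun i j =>
  if (i : ℕ) = 0 then 0
  else if (i : ℕ) = s then (if (j : ℕ) + 1 ≤ s then a ((j : ℕ) + 1) else 0)
  else if (i : ℕ) = d then b ((j : ℕ) + 1)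
  else if (j : ℕ) + 1 = (i : ℕ) then 1 else 0


/-!
Put `u i = r • v i - 1` for the vertices `v i` of `Δ(A,B)`. We write down integer vectors
`z 0, …, z d` with `⟨u i, z k⟩ = 1 - (d + 1) δ i k`. Such families span mutually polar simplices:
`conv u = {x | ∀ k, ⟨x, z k⟩ ≤ 1}` and symmetrically, so the polar of `conv u` is the lattice
simplex `conv z`; and since `∑ k, z k = 0`, a lattice point in the interior of `conv u` pairs to
`0` with every `z k`, hence is `0`.

The relation comes down to `⟨v i, z k⟩ = p` for `k = 0 ≠ i`, `-p` for `i = k ≠ 0` and `0`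
otherwise, together with `∑ j, z k j = d` for `k = 0` and `-1` otherwise, which combine to it
because `r p = d + 1`.
-/

open Matrix

theorem convex_setOf_dotProduct_le {n : ℕ} (z : Fin n → ℝ) (c : ℝ) :
    Convex ℝ {x : Fin n → ℝ | x ⬝ᵥ z ≤ c} :=
  convex_halfSpace_le ⟨fun x y => add_dotProduct x y z, fun a x => smul_dotProduct a x z⟩ c

theorem polarDual_convexHull {n : ℕ} (S : Set (Fin n → ℝ)) :
    polarDual (convexHull ℝ S) = polarDual S := by
  refine Set.Subset.antisymm (fun y hy x hx => hy x (subset_convexHull ℝ S hx)) fun y hy x hx => ?_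
  exact convexHull_min (t := {x | x ⬝ᵥ y ≤ 1}) (fun x hx => hy x hx)
    (convex_setOf_dotProduct_le y 1) hx

open Topology in
theorem exists_one_lt_smul_mem_of_mem_interior {E : Type*} [AddCommGroup E] [Module ℝ E]
    [TopologicalSpace E] [ContinuousSMul ℝ E] {s : Set E} {x : E} (hx : x ∈ interior s) :
    ∃ t : ℝ, 1 < t ∧ t • x ∈ s := by
  have hnhds : ∀ᶠ t in 𝓝 (1 : ℝ), t • x ∈ s :=
    (continuous_id.smul continuous_const).continuousAt.preimage_mem_nhds
      (by simpa using mem_interior_iff_mem_nhds.1 hx)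
  obtain ⟨t, hts, ht⟩ := ((hnhds.filter_mono nhdsWithin_le_nhds).and
    (self_mem_nhdsWithin : Set.Ioi (1 : ℝ) ∈ 𝓝[>] 1)).exists
  exact ⟨t, ht, hts⟩

section PolarPair

variable {n : ℕ}

def IsPolarPair (u z : Fin (n + 1) → Fin n → ℝ) : Prop :=
  ∀ i k, u i ⬝ᵥ z k = 1 - if i = k then (n + 1 : ℝ) else 0

variable {u z : Fin (n + 1) → Fin n → ℝ}

theorem IsPolarPair.symm (h : IsPolarPair u z) : IsPolarPair z u := by
  intro i k
  rw [dotProduct_comm, h k i]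
  simp only [eq_comm]

/-- Appending a coordinate `1` to each `u i` and `-1` to each `z k` turns the pairing into
`-(n + 1)` times the identity; square matrices commute with their inverses. -/
theorem IsPolarPair.sum_mul_eq_and_sum_eq_zero (h : IsPolarPair u z) :
    (∀ j l, ∑ k, z k j * u k l = if j = l then -(n + 1 : ℝ) else 0) ∧ ∀ l, ∑ k, u k l = 0 := by
  set W : Matrix (Fin (n + 1)) (Fin (n + 1)) ℝ := Matrix.of fun i => Fin.snoc (u i) 1
  set Z : Matrix (Fin (n + 1)) (Fin (n + 1)) ℝ := Matrix.of fun k => Fin.snoc (z k) (-1)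
  have hc : -(n + 1 : ℝ) ≠ 0 := neg_ne_zero.2 (by positivity)
  have hWZ : W * Zᵀ = (-(n + 1 : ℝ)) • 1 := by
    ext i k
    have := h i k
    simp only [dotProduct] at this
    simp only [W, Z, Matrix.mul_apply, Fin.sum_univ_castSucc, Matrix.transpose_apply,
      Matrix.of_apply, Fin.snoc_castSucc, Fin.snoc_last, this, Matrix.smul_apply,
      Matrix.one_apply, smul_eq_mul]
    split_ifs <;> ring
  have hZW : Zᵀ * W = (-(n + 1 : ℝ)) • 1 := by
    have hinv : W * ((-(n + 1 : ℝ))⁻¹ • Zᵀ) = 1 := by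
      rw [Matrix.mul_smul, hWZ, smul_smul, inv_mul_cancel₀ hc, one_smul]
    rw [← inv_smul_eq_iff₀ hc, ← Matrix.smul_mul]
    exact mul_eq_one_comm.1 hinv
  refine ⟨fun j l => ?_, fun l => ?_⟩
  · simpa [W, Z, Matrix.mul_apply, Matrix.one_apply] using congrFun₂ hZW j.castSucc l.castSucc
  · simpa [W, Z, Matrix.mul_apply, Matrix.one_apply, (Fin.castSucc_ne_last l).symm] using
      congrFun₂ hZW (Fin.last n) l.castSucc

theorem IsPolarPair.sum_eq_zero (h : IsPolarPair u z) : ∑ k, u k = 0 := by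
  ext l
  simpa using h.sum_mul_eq_and_sum_eq_zero.2 l

theorem IsPolarPair.sum_dotProduct_eq_zero (h : IsPolarPair u z) (x : Fin n → ℝ) :
    ∑ k, x ⬝ᵥ z k = 0 := by
  rw [← dotProduct_sum, h.symm.sum_eq_zero, dotProduct_zero]

theorem IsPolarPair.sum_dotProduct_smul (h : IsPolarPair u z) (x : Fin n → ℝ) :
    ∑ k, (x ⬝ᵥ z k) • u k = -(n + 1 : ℝ) • x := by
  ext l
  simp only [Finset.sum_apply, Pi.smul_apply, smul_eq_mul, dotProduct, Finset.sum_mul]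
  rw [Finset.sum_comm]
  simp_rw [mul_assoc, ← Finset.mul_sum, h.sum_mul_eq_and_sum_eq_zero.1]
  simp [mul_comm]

theorem IsPolarPair.convexHull_eq (h : IsPolarPair u z) :
    convexHull ℝ (Set.range u) = {x | ∀ k, x ⬝ᵥ z k ≤ 1} := by
  have hc : (0 : ℝ) < n + 1 := by positivity
  refine Set.Subset.antisymm (fun x hx k => ?_) fun x hx => ?_
  · refine convexHull_min ?_ (convex_setOf_dotProduct_le (z k) 1) hx
    rintro _ ⟨i, rfl⟩
    simp only [Set.mem_ofPred_eq, h i k]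
    split_ifs <;> linarith
  set w : Fin (n + 1) → ℝ := fun k => (1 - x ⬝ᵥ z k) / (n + 1)
  have hw : ∑ k, w k • u k = x := by
    simp only [w, div_eq_inv_mul, mul_smul, ← Finset.smul_sum, sub_smul, one_smul,
      Finset.sum_sub_distrib, h.sum_eq_zero, h.sum_dotProduct_smul, zero_sub, neg_smul, neg_neg]
    rw [smul_smul, inv_mul_cancel₀ hc.ne', one_smul]
  rw [← hw]
  refine (convex_convexHull ℝ _).sum_mem (fun k _ => ?_) ?_ fun k _ => subset_convexHull ℝ _ ⟨k, rfl⟩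
  · exact div_nonneg (by linarith [hx k]) hc.le
  · rw [← Finset.sum_div, Finset.sum_sub_distrib, h.sum_dotProduct_eq_zero, sub_zero,
      Finset.sum_const, Finset.card_univ, Fintype.card_fin, nsmul_one, Nat.cast_succ,
      div_self hc.ne']

theorem IsPolarPair.polarDual_convexHull (h : IsPolarPair u z) :
    polarDual (convexHull ℝ (Set.range u)) = convexHull ℝ (Set.range z) := by
  rw [_root_.polarDual_convexHull, h.symm.convexHull_eq]
  ext y
  simp only [polarDual, Set.forall_mem_range, Set.mem_ofPred_eq]
  exact forall_congr' fun i => by rw [dotProduct_comm]; rfl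

theorem IsPolarPair.zero_mem_interior (h : IsPolarPair u z) :
    0 ∈ interior (convexHull ℝ (Set.range u)) := by
  rw [h.convexHull_eq, mem_interior_iff_mem_nhds, Set.ofPred_forall]
  refine Filter.iInter_mem.2 fun k => ?_
  exact (continuous_id.dotProduct continuous_const).continuousAt.preimage_mem_nhds
    (Iic_mem_nhds (by simp))

/-- Pushing `x` slightly outwards stays in the simplex, so each integer `⟨x, z k⟩` is `< 1`,
i.e. `≤ 0`; as they sum to `0` they all vanish. -/
theorem IsPolarPair.eq_zero_of_mem_interior (h : IsPolarPair u z) {x : Fin n → ℝ}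
    (hx : x ∈ interior (convexHull ℝ (Set.range u))) (hint : ∀ k, ∃ m : ℤ, x ⬝ᵥ z k = m) :
    x = 0 := by
  obtain ⟨t, ht, htx⟩ := exists_one_lt_smul_mem_of_mem_interior hx
  rw [h.convexHull_eq] at htx
  have hle : ∀ k, x ⬝ᵥ z k ≤ 0 := by
    intro k
    obtain ⟨m, hm⟩ := hint k
    have hlt : x ⬝ᵥ z k < 1 := by
      have := htx k
      rw [smul_dotProduct, smul_eq_mul] at this
      nlinarith
    rw [hm] at hlt ⊢
    exact_mod_cast Int.lt_add_one_iff.1 (by exact_mod_cast hlt : m < 0 + 1)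
  have hzero := (Finset.sum_eq_zero_iff_of_nonpos fun k _ => hle k).1 (h.sum_dotProduct_eq_zero x)
  have := h.sum_dotProduct_smul x
  simp only [hzero, Finset.mem_univ, zero_smul, Finset.sum_const_zero] at this
  exact (smul_eq_zero.1 this.symm).resolve_left (neg_ne_zero.2 (by positivity))

end PolarPair

theorem toReal_dotProduct {n : ℕ} (v w : Fin n → ℤ) :
    toReal v ⬝ᵥ toReal w = ((v ⬝ᵥ w : ℤ) : ℝ) :=
  ((Int.castRingHom ℝ).map_dotProduct v w).symm

theorem isReflexive_convexHull_of_dotProduct_eq {n : ℕ} (u z : Fin (n + 1) → Fin n → ℤ)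
    (h : ∀ i k, u i ⬝ᵥ z k = 1 - if i = k then (n + 1 : ℤ) else 0) :
    IsReflexive (convexHull ℝ (Set.range fun i => toReal (u i))) := by
  have hpair : IsPolarPair (fun i => toReal (u i)) (fun k => toReal (z k)) := by
    intro i k
    rw [toReal_dotProduct, h i k]
    push_cast
    split_ifs <;> rfl
  refine ⟨hpair.zero_mem_interior, fun x hx hlat => hpair.eq_zero_of_mem_interior hx fun k => ?_,
    Finset.univ.image z, ?_⟩
  · choose m hm using hlat
    obtain rfl : x = toReal m := funext hm
    exact ⟨_, toReal_dotProduct m (z k)⟩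
  · rw [hpair.polarDual_convexHull, Finset.coe_image, Finset.coe_univ, Set.image_univ,
      ← Set.range_comp]
    rfl

theorem isGorenstein_of_isReflexive_smul_sub_one {d : ℕ} {P : Set (Fin d → ℝ)} {r : ℕ}
    (h : IsReflexive ((fun x => (r : ℝ) • x - 1) '' P)) : IsGorenstein P r := by
  refine ⟨-1, ?_⟩
  convert h using 3 with x
  ext j
  simp [toReal, sub_eq_add_neg]

theorem image_smul_sub_one_simplexOf {d : ℕ} (v : Fin (d + 1) → Fin d → ℤ) (r : ℕ) :
    (fun x => (r : ℝ) • x - 1) '' simplexOf v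
      = convexHull ℝ (Set.range fun i => toReal ((r : ℤ) • v i - 1)) := by
  let f : (Fin d → ℝ) →ᵃ[ℝ] (Fin d → ℝ) :=
    (r : ℝ) • AffineMap.id ℝ (Fin d → ℝ) - AffineMap.const ℝ (Fin d → ℝ) 1
  change f '' _ = _
  rw [simplexOf, f.image_convexHull, ← Set.range_comp]
  congr 2 with i j
  simp [f, toReal]

theorem Fin.sum_univ_eq_sum_Icc {M : Type*} [AddCommMonoid M] (d : ℕ) (f : ℕ → M) :
    ∑ j : Fin d, f (j + 1) = ∑ c ∈ Finset.Icc 1 d, f c := by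
  rw [Fin.sum_univ_eq_sum_range (fun j => f (j + 1)), Finset.range_eq_Ico,
    Finset.sum_Ico_add' f 0 d 1]
  rfl

/-- The standard basis vector `e_c` of `ℤ^d`, with `c` counted from `1`. -/
def coordVec (d c : ℕ) : Fin d → ℤ := fun j => if (j : ℕ) + 1 = c then 1 else 0

theorem dotProduct_coordVec {d c : ℕ} (f : ℕ → ℤ) (hc : 1 ≤ c) (hcd : c ≤ d) :
    (fun j : Fin d => f (j + 1)) ⬝ᵥ coordVec d c = f c := by
  simp only [dotProduct, coordVec, mul_ite, mul_one, mul_zero]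
  rw [Fin.sum_univ_eq_sum_Icc d (fun m => if m = c then f m else 0), Finset.sum_ite_eq']
  simp [hc, hcd]

theorem one_dotProduct_coordVec {d c : ℕ} (hc : 1 ≤ c) (hcd : c ≤ d) :
    1 ⬝ᵥ coordVec d c = 1 :=
  dotProduct_coordVec (fun _ => 1) hc hcd

/-- The coordinates of the vertices of `Δ(A,B)`, counted from `1`:
`simplexVerts2 d s a b i j = vertCoord d s a b i (j + 1)`. -/
def vertCoord (d s : ℕ) (a b : ℕ → ℤ) (i c : ℕ) : ℤ :=
  if i = 0 then 0 else if i = s then (if c ≤ s then a c else 0) else if i = d then b c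
  else if c = i then 1 else 0

theorem simplexVerts2_eq_vertCoord (d s : ℕ) (a b : ℕ → ℤ) (i : Fin (d + 1)) :
    simplexVerts2 d s a b i = fun j : Fin d => vertCoord d s a b i (j + 1) :=
  rfl

/-- `dualVertex d s p a b k` is the outer normal of the facet of `r • Δ(A,B) - 1` opposite to its
`k`-th vertex, scaled to pair to `1` with the vertices of that facet. -/
def dualVertex (d s p : ℕ) (a b : ℕ → ℤ) (k : ℕ) : Fin d → ℤ :=
  if k = 0 then
    (p : ℤ) • 1 + (1 - ∑ j : Fin d, vertCoord d s a b s (j + 1)) • coordVec d s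
      + (1 - ∑ j : Fin d, vertCoord d s a b d (j + 1)) • coordVec d d
  else if k = s then -coordVec d s
  else if k = d then -coordVec d d
  else vertCoord d s a b s k • coordVec d s + vertCoord d s a b d k • coordVec d d
    - (p : ℤ) • coordVec d k

section DualVertex

variable {d s p : ℕ} {a b : ℕ → ℤ}

theorem vertCoord_of_ne {i : ℕ} (hi0 : i ≠ 0) (his : i ≠ s) (hid : i ≠ d) (c : ℕ) :
    vertCoord d s a b i c = if c = i then 1 else 0 := by
  simp [vertCoord, hi0, his, hid]

theorem sum_vertCoord_of_ne {i : ℕ} (hi0 : i ≠ 0) (his : i ≠ s) (hid : i ≠ d) (hi : i ≤ d) :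
    ∑ j : Fin d, vertCoord d s a b i (j + 1) = 1 := by
  simp only [vertCoord_of_ne hi0 his hid]
  rw [Fin.sum_univ_eq_sum_Icc d (fun c => if c = i then (1 : ℤ) else 0), Finset.sum_ite_eq']
  simp [Nat.one_le_iff_ne_zero.2 hi0, hi]

theorem vertCoord_dotProduct_dualVertex_zero (hs : 1 ≤ s) (hsd : s < d)
    (has : a s = p) (hbd : b d = p) (hbs : b s = 0) {i : ℕ} (hi : i ≤ d) :
    (fun j : Fin d => vertCoord d s a b i (j + 1)) ⬝ᵥ dualVertex d s p a b 0 =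
      if i = 0 then 0 else (p : ℤ) := by
  simp only [dualVertex, if_true, dotProduct_add, dotProduct_smul, smul_eq_mul, dotProduct_one,
    dotProduct_coordVec _ hs hsd.le, dotProduct_coordVec _ (hs.trans hsd.le) le_rfl]
  rcases eq_or_ne i 0 with rfl | hi0
  · simp [vertCoord]
  rcases eq_or_ne i s with rfl | his
  · simp [vertCoord, hi0, has, hsd.not_ge]
    ring
  rcases eq_or_ne i d with rfl | hid
  · simp [vertCoord, hi0, hsd.ne', hbs, hbd]
    ring
  · rw [sum_vertCoord_of_ne hi0 his hid hi]
    simp [vertCoord_of_ne hi0 his hid, hi0, his.symm, hid.symm]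

theorem vertCoord_dotProduct_dualVertex_of_ne_zero (hs : 1 ≤ s) (hsd : s < d)
    (has : a s = p) (hbd : b d = p) (hbs : b s = 0) {i k : ℕ} (hk0 : k ≠ 0) (hk : k ≤ d) :
    (fun j : Fin d => vertCoord d s a b i (j + 1)) ⬝ᵥ dualVertex d s p a b k =
      if i = k then -(p : ℤ) else 0 := by
  have hs0 : s ≠ 0 := by omega
  have hd0 : d ≠ 0 := by omega
  have key : ∀ {c}, 1 ≤ c → c ≤ d → (fun j : Fin d => vertCoord d s a b i (j + 1)) ⬝ᵥ
      coordVec d c = vertCoord d s a b i c := dotProduct_coordVec _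
  rcases eq_or_ne k s with rfl | hks
  · simp only [dualVertex, hk0, if_false, if_true, dotProduct_neg, key hs hsd.le]
    rcases eq_or_ne i 0 with rfl | hi0
    · simp [vertCoord, hs0.symm]
    rcases eq_or_ne i k with rfl | his
    · simp [vertCoord, hs0, has]
    rcases eq_or_ne i d with rfl | hid
    · simp [vertCoord, hd0, hsd.ne', hbs]
    · simp [vertCoord_of_ne hi0 his hid, his, Ne.symm his]
  rcases eq_or_ne k d with rfl | hkd
  · simp only [dualVertex, hk0, hks, if_false, if_true, dotProduct_neg, key (hs.trans hsd.le) le_rfl]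
    rcases eq_or_ne i 0 with rfl | hi0
    · simp [vertCoord, hd0.symm]
    rcases eq_or_ne i s with rfl | his
    · simp [vertCoord, hs0, hsd.not_ge, hsd.ne]
    rcases eq_or_ne i k with rfl | hid
    · simp [vertCoord, hd0, hsd.ne', hbd]
    · simp [vertCoord_of_ne hi0 his hid, hid, Ne.symm hid]
  simp only [dualVertex, hk0, hks, hkd, if_false, dotProduct_add, dotProduct_sub, dotProduct_smul,
    smul_eq_mul, key hs hsd.le, key (hs.trans hsd.le) le_rfl, key (Nat.one_le_iff_ne_zero.2 hk0) hk]
  rcases eq_or_ne i 0 with rfl | hi0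
  · simp [vertCoord, hk0.symm]
  rcases eq_or_ne i s with rfl | his
  · simp [vertCoord, hs0, hsd.not_ge, hks.symm, has, mul_comm]
  rcases eq_or_ne i d with rfl | hid
  · simp [vertCoord, hd0, hsd.ne', hbs, hbd, hkd.symm]
    ring
  rcases eq_or_ne i k with rfl | hik
  · simp [vertCoord_of_ne hi0 his hid, his.symm, hid.symm]
  · simp [vertCoord_of_ne hi0 his hid, his.symm, hid.symm, hik, hik.symm]

theorem sum_vertCoord_add_sum_vertCoord (hs : 1 ≤ s) (hsd : s < d)
    (has : a s = p) (hbd : b d = p) (hbs : b s = 0)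
    (hab : ∀ i, 1 ≤ i → i ≤ s - 1 → a i + b i = (p : ℤ) - 1)
    (hb2 : ∀ i, s + 1 ≤ i → i ≤ d - 1 → b i = (p : ℤ) - 1) :
    ∑ j : Fin d, vertCoord d s a b s (j + 1) + ∑ j : Fin d, vertCoord d s a b d (j + 1)
      = ((p : ℤ) - 1) * d + 2 := by
  rw [Fin.sum_univ_eq_sum_Icc d (vertCoord d s a b s),
    Fin.sum_univ_eq_sum_Icc d (vertCoord d s a b d), ← Finset.sum_add_distrib]
  have hcol : ∀ c ∈ Finset.Icc 1 d, vertCoord d s a b s c + vertCoord d s a b d c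
      = ((p : ℤ) - 1) + ((if c = s then 1 else 0) + (if c = d then 1 else 0)) := by
    intro c hc
    rw [Finset.mem_Icc] at hc
    simp only [vertCoord, if_neg (show s ≠ 0 by omega), if_neg (show d ≠ 0 by omega),
      if_neg (show d ≠ s by omega), if_true]
    rcases lt_trichotomy c s with hcs | rfl | hcs
    · simp [hcs.le, hcs.ne, (hcs.trans hsd).ne, hab c hc.1 (by omega)]
    · simp [has, hbs, hsd.ne]
    · rcases hc.2.lt_or_eq with hcd | rfl
      · simp [hcs.not_ge, hcs.ne', hcd.ne, hb2 c hcs hcd.le_pred]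
      · simp [hcs.not_ge, hcs.ne', hbd]
  rw [Finset.sum_congr rfl hcol, Finset.sum_add_distrib, Finset.sum_add_distrib,
    Finset.sum_ite_eq', Finset.sum_ite_eq']
  simp [hs, hsd.le, hs.trans hsd.le]
  ring

theorem one_dotProduct_dualVertex (hs : 1 ≤ s) (hsd : s < d)
    (has : a s = p) (hbd : b d = p) (hbs : b s = 0)
    (hab : ∀ i, 1 ≤ i → i ≤ s - 1 → a i + b i = (p : ℤ) - 1)
    (hb2 : ∀ i, s + 1 ≤ i → i ≤ d - 1 → b i = (p : ℤ) - 1) {k : ℕ} (hk : k ≤ d) :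
    1 ⬝ᵥ dualVertex d s p a b k = if k = 0 then (d : ℤ) else -1 := by
  have hd1 : 1 ≤ d := hs.trans hsd.le
  rcases eq_or_ne k 0 with rfl | hk0
  · simp only [dualVertex, if_true, dotProduct_add, dotProduct_smul, smul_eq_mul,
      one_dotProduct_coordVec hs hsd.le, one_dotProduct_coordVec hd1 le_rfl, one_dotProduct_one,
      Fintype.card_fin]
    linear_combination -sum_vertCoord_add_sum_vertCoord hs hsd has hbd hbs hab hb2
  rcases eq_or_ne k s with rfl | hks
  · simp [dualVertex, hk0, one_dotProduct_coordVec hs hsd.le]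
  rcases eq_or_ne k d with rfl | hkd
  · simp [dualVertex, hk0, hks, one_dotProduct_coordVec hd1 le_rfl]
  simp only [dualVertex, hk0, hks, hkd, if_false, dotProduct_add, dotProduct_sub, dotProduct_smul,
    smul_eq_mul, one_dotProduct_coordVec hs hsd.le, one_dotProduct_coordVec hd1 le_rfl,
    one_dotProduct_coordVec (Nat.one_le_iff_ne_zero.2 hk0) hk, vertCoord,
    if_neg (show s ≠ 0 by omega), if_neg (show d ≠ 0 by omega), if_neg (show d ≠ s by omega),
    if_true]
  rcases hks.lt_or_gt with hks | hks
  · simp [hks.le, hab k (Nat.one_le_iff_ne_zero.2 hk0) (by omega)]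
  · simp [hks.not_ge, hb2 k hks (by omega)]

theorem smul_sub_one_dotProduct_dualVertex {r : ℕ} (hs : 1 ≤ s) (hsd : s < d)
    (has : a s = p) (hbd : b d = p) (hbs : b s = 0) (hd : d + 1 = r * p)
    (hab : ∀ i, 1 ≤ i → i ≤ s - 1 → a i + b i = (p : ℤ) - 1)
    (hb2 : ∀ i, s + 1 ≤ i → i ≤ d - 1 → b i = (p : ℤ) - 1) (i k : Fin (d + 1)) :
    ((r : ℤ) • simplexVerts2 d s a b i - 1) ⬝ᵥ dualVertex d s p a b k
      = 1 - if i = k then (d + 1 : ℤ) else 0 := by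
  have hdZ : (d : ℤ) + 1 = r * p := by exact_mod_cast hd
  rw [sub_dotProduct, smul_dotProduct, smul_eq_mul,
    one_dotProduct_dualVertex hs hsd has hbd hbs hab hb2 k.is_le, simplexVerts2_eq_vertCoord]
  simp only [Fin.ext_iff]
  rcases eq_or_ne (k : ℕ) 0 with hk0 | hk0
  · rw [hk0, vertCoord_dotProduct_dualVertex_zero hs hsd has hbd hbs i.is_le]
    split_ifs <;> omega
  · rw [vertCoord_dotProduct_dualVertex_of_ne_zero hs hsd has hbd hbs hk0 k.is_le]
    split_ifs <;> first | omega | linear_combination hdZ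

end DualVertex

theorem statement11_general (d s : ℕ) (hs : 1 ≤ s) (hsd : s < d)
    (p r : ℕ) (a b : ℕ → ℤ)
    (has : a s = (p : ℤ)) (hbd : b d = (p : ℤ)) (hbs : b s = 0)
    (hd : d + 1 = r * p)
    (hab : ∀ i, 1 ≤ i → i ≤ s - 1 → a i + b i = (p : ℤ) - 1)
    (hb2 : ∀ i, s + 1 ≤ i → i ≤ d - 1 → b i = (p : ℤ) - 1) :
    IsGorenstein (simplexOf (simplexVerts2 d s a b)) r ∧
      IsReflexive ((fun x => (r : ℝ) • x - 1) '' simplexOf (simplexVerts2 d s a b)) := by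
  have hrefl : IsReflexive ((fun x => (r : ℝ) • x - 1) '' simplexOf (simplexVerts2 d s a b)) := by
    rw [image_smul_sub_one_simplexOf]
    exact isReflexive_convexHull_of_dotProduct_eq _ (fun k => dualVertex d s p a b k)
      (smul_sub_one_dotProduct_dualVertex hs hsd has hbd hbs hd hab hb2)
  exact ⟨isGorenstein_of_isReflexive_smul_sub_one hrefl, hrefl⟩

/-- with `a s = b d = p` prime, `b s = 0`, `d = r·p - 1`,
`a i + b i = p - 1` for `1 ≤ i ≤ s-1` and `b i = p - 1` for `s+1 ≤ i ≤ d-1`,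
the simplex `Δ(A,B)` is Gorenstein of index `r`, i.e. `r·Δ(A,B) - (1,…,1)` is
reflexive. -/
theorem statement11 (d s : ℕ) (hs : 1 ≤ s) (hsd : s < d)
    (p r : ℕ) (hp : p.Prime) (hr : 1 ≤ r) (a b : ℕ → ℤ)
    (harange : ∀ i, 1 ≤ i → i ≤ s - 1 → 0 ≤ a i ∧ a i < a s)
    (hbrange : ∀ i, 1 ≤ i → i ≤ d - 1 → 0 ≤ b i ∧ b i < b d)
    (has : a s = (p : ℤ)) (hbd : b d = (p : ℤ)) (hbs : b s = 0)
    (hd : d + 1 = r * p)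
    (hab : ∀ i, 1 ≤ i → i ≤ s - 1 → a i + b i = (p : ℤ) - 1)
    (hb2 : ∀ i, s + 1 ≤ i → i ≤ d - 1 → b i = (p : ℤ) - 1) :
    IsGorenstein (simplexOf (simplexVerts2 d s a b)) r ∧
      IsReflexive ((fun x => (r : ℝ) • x - 1) '' simplexOf (simplexVerts2 d s a b)) :=
  statement11_general d s hs hsd p r a b has hbd hbs hd hab hb2
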